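/- arXiv:1203.0704 — 2 statements merged into one kernel-verified Lean document; each statement's English description precedes it below -/
import Mathlib

section
/- Let G be a transitive permutation group on a finite set X, and let H be a transitive permutation group on a finite set Y. Let B be the partition of X × Y into the sets {x} × Y (the orbits of the subgroup 1 ≀ H of G ≀ H). If C is any (G ≀ H)-invariant partition of X × Y, then either every block of B is contained in a block of C, or every block of C is contained in a block of B. -/
/-!
If some block `c` of an invariant partition meets two fibres `{x} × Y` and `{x'} × Y`, then a
wreath element acting only on the fibre over `x` fixes the points of `c` over `x'`, hence maps
`c` to itself; as `H` is transitive on `Y`, `c` contains the whole fibre over `x`. Translating by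
`G`, which is transitive on `X`, every fibre lies in a block. Otherwise every block lies in a
single fibre.
-/

open Equiv

namespace Equiv.Perm

variable {X Y : Type*}

def wreath (G : Subgroup (Perm X)) (H : Subgroup (Perm Y)) : Set (Perm (X × Y)) :=
  {f | ∃ g ∈ G, ∃ h : X → Perm Y, (∀ x, h x ∈ H) ∧ ∀ p : X × Y, f p = (g p.1, h p.1 p.2)}

theorem prodShear_mem_wreath {G : Subgroup (Perm X)} {H : Subgroup (Perm Y)} {g : Perm X}
    (hg : g ∈ G) {h : X → Perm Y} (hh : ∀ x, h x ∈ H) : prodShear g h ∈ wreath G H :=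
  ⟨g, hg, h, hh, fun _ => rfl⟩

theorem prodShear_mulSingle_mem_wreath [DecidableEq X] {G : Subgroup (Perm X)}
    {H : Subgroup (Perm Y)} (x : X) {h : Perm Y} (hh : h ∈ H) :
    prodShear 1 (Pi.mulSingle x h) ∈ wreath G H := by
  refine prodShear_mem_wreath G.one_mem fun x' => ?_
  rw [Pi.mulSingle_apply]
  split_ifs
  exacts [hh, H.one_mem]

end Equiv.Perm

open Equiv.Perm

theorem prodShear_image_singleton_prod_univ {X Y : Type*} (g : Perm X) (x : X) :
    prodShear g (1 : X → Perm Y) '' ({x} ×ˢ Set.univ) = {g x} ×ˢ Set.univ := by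
  ext ⟨a, b⟩
  simp [eq_comm]

section InvariantPartition

variable {X Y : Type*} {G : Subgroup (Perm X)} {H : Subgroup (Perm Y)} {C : Set (Set (X × Y))}

theorem image_eq_self_of_apply_eq
    (hCdis : ∀ c ∈ C, ∀ c' ∈ C, (c ∩ c').Nonempty → c = c')
    (hCinv : ∀ f ∈ wreath G H, ∀ c ∈ C, f '' c ∈ C)
    {f : Perm (X × Y)} (hf : f ∈ wreath G H) {c : Set (X × Y)} (hc : c ∈ C)
    {q : X × Y} (hq : q ∈ c) (hfq : f q = q) : f '' c = c :=
  (hCdis c hc _ (hCinv f hf c hc) ⟨q, hq, q, hq, hfq⟩).symm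

theorem fiber_subset_of_fst_ne (hH : ∀ y y' : Y, ∃ h ∈ H, h y = y')
    (hCdis : ∀ c ∈ C, ∀ c' ∈ C, (c ∩ c').Nonempty → c = c')
    (hCinv : ∀ f ∈ wreath G H, ∀ c ∈ C, f '' c ∈ C)
    {c : Set (X × Y)} (hc : c ∈ C) {p q : X × Y} (hp : p ∈ c) (hq : q ∈ c) (hpq : p.1 ≠ q.1) :
    {p.1} ×ˢ Set.univ ⊆ c := by
  classical
  rintro ⟨x, y⟩ ⟨rfl : x = p.1, -⟩
  obtain ⟨h, hh, hy⟩ := hH p.2 y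
  set f := prodShear (1 : Perm X) (Pi.mulSingle p.1 h)
  have hfq : f q = q := by
    simp [f, Pi.mulSingle_eq_of_ne (Ne.symm hpq)]
  have hfc : f '' c = c :=
    image_eq_self_of_apply_eq hCdis hCinv (prodShear_mulSingle_mem_wreath p.1 hh) hc hq hfq
  have hfp : f p = (p.1, y) := by
    simp [f, hy]
  exact hfc ▸ hfp ▸ Set.mem_image_of_mem f hp

end InvariantPartition

theorem stmt_0_general {X Y : Type*}
    (G : Subgroup (Perm X)) (H : Subgroup (Perm Y))
    (hG : ∀ x x' : X, ∃ g ∈ G, g x = x')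
    (hH : ∀ y y' : Y, ∃ h ∈ H, h y = y')
    (C : Set (Set (X × Y)))
    (hCne : ∀ c ∈ C, c.Nonempty)
    (hCdis : ∀ c ∈ C, ∀ c' ∈ C, (c ∩ c').Nonempty → c = c')
    (hCinv : ∀ f : Perm (X × Y),
      (∃ g ∈ G, ∃ h : X → Perm Y, (∀ x, h x ∈ H) ∧
        ∀ p : X × Y, f p = (g p.1, h p.1 p.2)) →
      ∀ c ∈ C, f '' c ∈ C) :
    (∀ x : X, ∃ c ∈ C, ({x} ×ˢ (Set.univ : Set Y)) ⊆ c) ∨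
    (∀ c ∈ C, ∃ x : X, c ⊆ ({x} ×ˢ (Set.univ : Set Y))) := by
  by_cases hsplit : ∃ c ∈ C, ∃ p ∈ c, ∃ q ∈ c, p.1 ≠ q.1
  · left
    obtain ⟨c, hc, p, hp, q, hq, hpq⟩ := hsplit
    have hfiber := fiber_subset_of_fst_ne hH hCdis hCinv hc hp hq hpq
    intro x
    obtain ⟨g, hg, rfl⟩ := hG p.1 x
    let f := prodShear g (1 : X → Perm Y)
    have hf : f ∈ wreath G H := prodShear_mem_wreath hg fun _ => H.one_mem
    exact ⟨f '' c, hCinv f hf c hc, prodShear_image_singleton_prod_univ g p.1 ▸ Set.image_mono hfiber⟩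
  · right
    push Not at hsplit
    intro c hc
    obtain ⟨p, hp⟩ := hCne c hc
    exact ⟨p.1, fun q hq => ⟨hsplit c hc q hq p hp, trivial⟩⟩

/-- A quotient-style block lemma: for wreath products, any invariant partition is
comparable with the partition into fibers `{x} × Y`. -/
theorem stmt_0 {X Y : Type*} [Fintype X] [Fintype Y]
    (G : Subgroup (Perm X)) (H : Subgroup (Perm Y))
    (hG : ∀ x x' : X, ∃ g ∈ G, g x = x')
    (hH : ∀ y y' : Y, ∃ h ∈ H, h y = y')
    (C : Set (Set (X × Y)))
    (hCne : ∀ c ∈ C, c.Nonempty)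
    (hCcov : ∀ p : X × Y, ∃ c ∈ C, p ∈ c)
    (hCdis : ∀ c ∈ C, ∀ c' ∈ C, (c ∩ c').Nonempty → c = c')
    (hCinv : ∀ f : Perm (X × Y),
      (∃ g ∈ G, ∃ h : X → Perm Y, (∀ x, h x ∈ H) ∧
        ∀ p : X × Y, f p = (g p.1, h p.1 p.2)) →
      ∀ c ∈ C, f '' c ∈ C) :
    (∀ x : X, ∃ c ∈ C, ({x} ×ˢ (Set.univ : Set Y)) ⊆ c) ∨
    (∀ c ∈ C, ∃ x : X, c ⊆ ({x} ×ˢ (Set.univ : Set Y))) :=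
  stmt_0_general G H hG hH C hCne hCdis hCinv
end

section
/- Every quotient group of a finite CI-group with respect to digraphs is a CI-group with respect to digraphs. That is, if G is a finite group such that for all S, S' ⊆ G, Cay(G,S) ≅ Cay(G,S') implies α(S) = S' for some α ∈ Aut(G), and H is a normal subgroup of G, then G/H has the same property. -/
open Equiv Pointwise MulAction

/-!
A Cayley digraph isomorphism `e` of `G ⧸ H` lifts to a permutation of `G` that permutes the
`H`-cosets as `e` does; it is an isomorphism between the digraphs on the preimages of the
connection sets, so the CI property of `G` yields `α ∈ Aut G` carrying one preimage to the
other. Such an `α` descends to `G ⧸ H` once `α(H) = H`, and this is automatic when `H` is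
exactly the stabilizer of the preimage, that is, when the connection set `T` has trivial
stabilizer in `G ⧸ H`. The same `e` is an isomorphism for `S \ {1}` and for `(S ∪ {1})⁻¹`, and
one of these has trivial stabilizer: nontrivial `s` and `r` stabilizing them would give
`r⁻¹ ∈ S`, then `s r⁻¹ ∈ S`, then `s ∈ S`, and finally `1 = s⁻¹ s ∈ S \ {1}`.
-/

def IsCayleyIso {G : Type*} [Group G] (e : Perm G) (S S' : Set G) : Prop :=
  ∀ a b : G, a⁻¹ * b ∈ S ↔ (e a)⁻¹ * e b ∈ S'

def IsDigraphCIGroup (G : Type*) [Group G] : Prop :=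
  ∀ S S' : Set G, (∃ e : Perm G, IsCayleyIso e S S') → ∃ α : G ≃* G, α '' S = S'

namespace IsCayleyIso

variable {G : Type*} [Group G] {e : Perm G} {S S' : Set G}

theorem one_mem_iff (h : IsCayleyIso e S S') : (1 : G) ∈ S ↔ 1 ∈ S' := by
  simpa using h 1 1

theorem sdiff_one (h : IsCayleyIso e S S') : IsCayleyIso e (S \ {1}) (S' \ {1}) := by
  intro a b
  simp only [Set.mem_sdiff, Set.mem_singleton_iff, inv_mul_eq_one, h a b, e.apply_eq_iff_eq]

theorem insert_one (h : IsCayleyIso e S S') : IsCayleyIso e (insert 1 S) (insert 1 S') := by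
  intro a b
  simp only [Set.mem_insert_iff, inv_mul_eq_one, h a b, e.apply_eq_iff_eq]

theorem inv (h : IsCayleyIso e S S') : IsCayleyIso e S⁻¹ S'⁻¹ := fun a b => by
  simpa only [Set.mem_inv, mul_inv_rev, inv_inv] using h b a

theorem preimage {K : Type*} [Group K] (f : K →* G) {E : Perm K} (hE : ∀ k, f (E k) = e (f k))
    (h : IsCayleyIso e S S') : IsCayleyIso E (f ⁻¹' S) (f ⁻¹' S') := fun a b => by
  simp only [Set.mem_preimage, map_mul, map_inv, hE, h (f a) (f b)]

end IsCayleyIso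

theorem QuotientGroup.exists_perm_mk_apply {G : Type*} [Group G] (H : Subgroup G)
    (e : Perm (G ⧸ H)) : ∃ E : Perm G, ∀ g, (E g : G ⧸ H) = e g :=
  ⟨Subgroup.groupEquivQuotientProdSubgroup.symm.permCongr (e.prodCongr (Equiv.refl H)),
    fun _ => congrArg Prod.fst (Subgroup.groupEquivQuotientProdSubgroup.apply_symm_apply _)⟩

theorem MulAction.stabilizer_preimage {G K : Type*} [Group G] [Group K] {f : G →* K}
    (hf : Function.Surjective f) (T : Set K) :
    stabilizer G (f ⁻¹' T) = (stabilizer K T).comap f := by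
  ext g
  simp only [Subgroup.mem_comap, mem_stabilizer_set, Set.mem_preimage, smul_eq_mul, map_mul]
  exact (hf.forall (p := fun k => f g * k ∈ T ↔ k ∈ T)).symm

theorem MulAction.stabilizer_image {G K : Type*} [Group G] [Group K] (α : G ≃* K) (X : Set G) :
    (stabilizer G X).map α.toMonoidHom = stabilizer K (α '' X) := by
  ext k
  obtain ⟨g, rfl⟩ := α.surjective k
  rw [Subgroup.mem_map_equiv, α.symm_apply_apply, mem_stabilizer_iff, mem_stabilizer_iff,
    ← Set.image_smul_distrib, α.injective.image_injective.eq_iff]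

theorem MulAction.stabilizer_eq_bot_or_stabilizer_insert_one_inv_eq_bot {Q : Type*} [Group Q]
    {Z : Set Q} (hZ : (1 : Q) ∉ Z) :
    stabilizer Q Z = ⊥ ∨ stabilizer Q (insert 1 Z)⁻¹ = ⊥ := by
  refine or_iff_not_imp_left.2 fun hZbot => (Subgroup.bot_or_exists_ne_one _).resolve_right ?_
  rintro ⟨r, hr, hr1⟩
  obtain ⟨s, hs, hs1⟩ := (Subgroup.bot_or_exists_ne_one _).resolve_left hZbot
  have act {g : Q} {A : Set Q} (hg : g ∈ stabilizer Q A) {x : Q} (hx : x ∈ A) : g * x ∈ A :=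
    (mem_stabilizer_set.1 hg x).2 hx
  have hrZ : r⁻¹ ∈ Z := by
    have := act hr (x := 1) (by simp)
    exact Set.mem_of_mem_insert_of_ne (by simpa using this) (inv_ne_one.2 hr1)
  have hsZ : s ∈ Z := by
    have := act (inv_mem hr) (x := (s * r⁻¹)⁻¹) (by simpa using Or.inr (act hs hrZ))
    exact Set.mem_of_mem_insert_of_ne (by simpa using this) hs1
  exact hZ (by simpa using act (inv_mem hs) hsZ)

theorem QuotientGroup.image_congr_eq {G : Type*} [Group G] {H : Subgroup G} [H.Normal]
    (α : G ≃* G) (hα : H.map α.toMonoidHom = H) {T T' : Set (G ⧸ H)}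
    (h : α '' (mk' H ⁻¹' T) = mk' H ⁻¹' T') : congr H H α hα '' T = T' := by
  have hmk := mk'_surjective H
  calc congr H H α hα '' T = congr H H α hα '' (mk' H '' (mk' H ⁻¹' T)) := by
        rw [Set.image_preimage_eq _ hmk]
    _ = mk' H '' (α '' (mk' H ⁻¹' T)) := by rw [Set.image_image, Set.image_image]; rfl
    _ = T' := by rw [h, Set.image_preimage_eq _ hmk]

theorem IsDigraphCIGroup.exists_quotient_image_eq {G : Type*} [Group G] [Finite G]
    (hG : IsDigraphCIGroup G) (H : Subgroup G) [H.Normal] {e : Perm (G ⧸ H)}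
    {T T' : Set (G ⧸ H)} (h : IsCayleyIso e T T') (hT : stabilizer (G ⧸ H) T = ⊥) :
    ∃ σ : (G ⧸ H) ≃* (G ⧸ H), σ '' T = T' := by
  obtain ⟨E, hE⟩ := QuotientGroup.exists_perm_mk_apply H e
  obtain ⟨α, hα⟩ := hG _ _ ⟨E, h.preimage (QuotientGroup.mk' H) hE⟩
  have hstab := stabilizer_preimage (QuotientGroup.mk'_surjective H)
  have hH : stabilizer G (QuotientGroup.mk' H ⁻¹' T) = H := by
    rw [hstab, hT, MonoidHom.comap_bot, QuotientGroup.ker_mk']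
  have hαH : H.map α.toMonoidHom = H := by
    have hmap := stabilizer_image α (QuotientGroup.mk' H ⁻¹' T)
    rw [hH, hα, hstab] at hmap
    refine (Subgroup.eq_of_le_of_card_ge ?_ ?_).symm
    · exact hmap ▸ (QuotientGroup.ker_mk' H).ge.trans (MonoidHom.ker_le_comap _ _)
    · rw [Subgroup.card_map_of_injective α.injective]
  exact ⟨_, QuotientGroup.image_congr_eq α hαH hα⟩

theorem MulEquiv.image_eq_of_image_sdiff_one {Q : Type*} [Group Q] (σ : Q ≃* Q)
    {S S' : Set Q} (h1 : (1 : Q) ∈ S ↔ 1 ∈ S') (h : σ '' (S \ {1}) = S' \ {1}) :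
    σ '' S = S' := by
  ext x
  by_cases hx : x = 1
  · subst hx
    simpa using h1
  · simpa [Set.image_sdiff σ.injective, hx] using congr(x ∈ $h)

theorem MulEquiv.image_eq_of_image_insert_one {Q : Type*} [Group Q] (σ : Q ≃* Q)
    {S S' : Set Q} (h1 : (1 : Q) ∈ S ↔ 1 ∈ S') (h : σ '' insert 1 S = insert 1 S') :
    σ '' S = S' := by
  refine σ.image_eq_of_image_sdiff_one h1 ?_
  rw [← Set.insert_sdiff_of_mem S (Set.mem_singleton 1),
    ← Set.insert_sdiff_of_mem S' (Set.mem_singleton 1), Set.image_sdiff σ.injective, h,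
    Set.image_singleton, map_one]

/-- A quotient of a finite CI-group with respect to digraphs is a CI-group with
respect to digraphs. -/
theorem stmt_6 {G : Type*} [Group G] [Fintype G]
    (hCI : ∀ S S' : Set G,
      (∃ e : Perm G, ∀ a b : G, a⁻¹ * b ∈ S ↔ (e a)⁻¹ * (e b) ∈ S') →
      ∃ α : G ≃* G, α '' S = S')
    (H : Subgroup G) [H.Normal] :
    ∀ S S' : Set (G ⧸ H),
      (∃ e : Perm (G ⧸ H), ∀ a b : G ⧸ H, a⁻¹ * b ∈ S ↔ (e a)⁻¹ * (e b) ∈ S') →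
      ∃ α : (G ⧸ H) ≃* (G ⧸ H), α '' S = S' := by
  rintro S S' ⟨e, he⟩
  have hG : IsDigraphCIGroup G := hCI
  replace he : IsCayleyIso e S S' := he
  rcases stabilizer_eq_bot_or_stabilizer_insert_one_inv_eq_bot (Z := S \ {1}) (fun h => h.2 rfl)
    with hbot | hbot
  · obtain ⟨σ, hσ⟩ := hG.exists_quotient_image_eq H he.sdiff_one hbot
    exact ⟨σ, σ.image_eq_of_image_sdiff_one he.one_mem_iff hσ⟩
  · rw [Set.insert_sdiff_singleton] at hbot
    obtain ⟨σ, hσ⟩ := hG.exists_quotient_image_eq H he.insert_one.inv hbot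
    rw [Set.image_inv, inv_inj] at hσ
    exact ⟨σ, σ.image_eq_of_image_insert_one he.one_mem_iff hσ⟩
end
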